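/- Let Q be an inverse quantal frame and X a Q-sheaf. If s and t are principal sections of X, then ⟨s,t⟩ is a partial unit of Q, i.e., ⟨s,t⟩ ∈ Q_I. -/

import Mathlib

/-- A unital involutive quantale: a complete lattice with an associative
multiplication preserving arbitrary joins in each variable, a unit `e`, and a
join-preserving involution. -/
structure IQuantale (Q : Type*) [CompleteLattice Q] where
  mul : Q → Q → Q
  e : Q
  star : Q → Q
  mul_assoc : ∀ a b c, mul (mul a b) c = mul a (mul b c)
  sSup_mul : ∀ (S : Set Q) (b : Q), mul (sSup S) b = ⨆ a ∈ S, mul a b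
  mul_sSup : ∀ (a : Q) (S : Set Q), mul a (sSup S) = ⨆ b ∈ S, mul a b
  e_mul : ∀ a, mul e a = a
  mul_e : ∀ a, mul a e = a
  star_star : ∀ a, star (star a) = a
  star_mul : ∀ a b, star (mul a b) = mul (star b) (star a)
  star_sSup : ∀ S : Set Q, star (sSup S) = ⨆ a ∈ S, star a

/-- The set of partial units of a quantale. -/
def IQuantale.PU {Q : Type*} [CompleteLattice Q] (Qs : IQuantale Q) : Set Q :=
  {s | Qs.mul s (Qs.star s) ≤ Qs.e ∧ Qs.mul (Qs.star s) s ≤ Qs.e}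

/-- An inverse quantal frame: a unital involutive quantale which is a frame,
has a stable support, and whose partial units join to the top. -/
structure InverseQuantalFrame (Q : Type*) [Order.Frame Q] extends IQuantale Q where
  supp : Q → Q
  supp_le_e : ∀ a, supp a ≤ e
  supp_sSup : ∀ S : Set Q, supp (sSup S) = ⨆ a ∈ S, supp a
  supp_le_mul_star : ∀ a, supp a ≤ mul a (star a)
  le_supp_mul : ∀ a, a ≤ mul (supp a) a
  supp_stable : ∀ b a, b ≤ e → supp (mul b a) = mul b (supp a)
  sSup_PU : sSup {s | mul s (star s) ≤ e ∧ mul (star s) s ≤ e} = ⊤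

/-- A left module over a quantale: a complete lattice with a unital associative
action preserving arbitrary joins in each variable. -/
structure QuantaleModule {Q : Type*} [CompleteLattice Q] (Qs : IQuantale Q)
    (X : Type*) [CompleteLattice X] where
  act : Q → X → X
  act_mul : ∀ a b x, act (Qs.mul a b) x = act a (act b x)
  act_e : ∀ x, act Qs.e x = x
  sSup_act : ∀ (S : Set Q) (x : X), act (sSup S) x = ⨆ a ∈ S, act a x
  act_sSup : ∀ (a : Q) (S : Set X), act a (sSup S) = ⨆ x ∈ S, act a x

/-- A pre-Hilbert module over a quantale. -/
structure PreHilbertModule {Q : Type*} [CompleteLattice Q] (Qs : IQuantale Q)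
    (X : Type*) [CompleteLattice X] extends QuantaleModule Qs X where
  inner : X → X → Q
  inner_act : ∀ a x y, inner (act a x) y = Qs.mul a (inner x y)
  sSup_inner : ∀ (S : Set X) (y : X), inner (sSup S) y = ⨆ x ∈ S, inner x y
  inner_star : ∀ x y, inner x y = Qs.star (inner y x)

namespace PreHilbertModule

variable {Q X : Type*} [CompleteLattice Q] [CompleteLattice X] {Qs : IQuantale Q}

/-- A Hilbert section: `⟨x,s⟩s ≤ x` for all `x`. -/
def IsHilbertSection (H : PreHilbertModule Qs X) (s : X) : Prop :=
  ∀ x, H.act (H.inner x s) s ≤ x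

/-- A regular element: `⟨s,s⟩s = s`. -/
def IsRegularSection (H : PreHilbertModule Qs X) (s : X) : Prop :=
  H.act (H.inner s s) s = s

/-- A Hilbert basis: `x = ⋁_{t ∈ S} ⟨x,t⟩t` for all `x`. -/
def IsHilbertBasis (H : PreHilbertModule Qs X) (S : Set X) : Prop :=
  ∀ x, x = ⨆ t ∈ S, H.act (H.inner x t) t

/-- Non-degeneracy of the inner product. -/
def Nondegenerate (H : PreHilbertModule Qs X) : Prop :=
  ∀ x y, (∀ z, H.inner x z = H.inner y z) → x = y

end PreHilbertModule

/-- A `Q`-locale over an inverse quantal frame: a module which is a frame and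
satisfies the anchor condition. -/
structure QLocale {Q : Type*} [Order.Frame Q] (Qf : InverseQuantalFrame Q)
    (X : Type*) [Order.Frame X] extends QuantaleModule Qf.toIQuantale X where
  anchor : ∀ b x, b ≤ Qf.e → act b x = act b ⊤ ⊓ x

/-- A `Q`-sheaf over an inverse quantal frame: a pre-Hilbert module which is a
frame, satisfies the anchor condition, and has a Hilbert basis. -/
structure QSheaf {Q : Type*} [Order.Frame Q] (Qf : InverseQuantalFrame Q)
    (X : Type*) [Order.Frame X] extends PreHilbertModule Qf.toIQuantale X where
  anchor : ∀ b x, b ≤ Qf.e → act b x = act b ⊤ ⊓ x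
  hasBasis : ∃ S : Set X, ∀ x, x = ⨆ t ∈ S, act (inner x t) t

namespace QSheaf

variable {Q X : Type*} [Order.Frame Q] [Order.Frame X] {Qf : InverseQuantalFrame Q}

/-- The support `ς_X(x) = ⟨x,x⟩ ∧ e` of a `Q`-sheaf. -/
def sppX (H : QSheaf Qf X) (x : X) : Q := H.inner x x ⊓ Qf.e

/-- A local section: `ς_X(x)s = x` for all `x ≤ s`. -/
def IsLocalSection (H : QSheaf Qf X) (s : X) : Prop :=
  ∀ x ≤ s, H.act (H.sppX x) s = x

/-- A principal section: a local section with `⟨s,s⟩ ≤ e`. -/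
def IsPrincipalSection (H : QSheaf Qf X) (s : X) : Prop :=
  H.IsLocalSection s ∧ H.inner s s ≤ Qf.e

/-- A right local section: `x = s ∧ 1_Q·x` for all `x ≤ s`. -/
def IsRightLocalSection (H : QSheaf Qf X) (s : X) : Prop :=
  ∀ x ≤ s, x = s ⊓ H.act ⊤ x

/-- A local bisection: simultaneously a local section and a right local section. -/
def IsBisection (H : QSheaf Qf X) (s : X) : Prop :=
  H.IsLocalSection s ∧ H.IsRightLocalSection s

end QSheaf

/-!
For principal sections `s, t` we have `⟨s,t⟩⟨s,t⟩* = ⟨⟨s,t⟩t, s⟩`, so it suffices to know that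
local sections `t` are Hilbert sections, `⟨x,t⟩t ≤ x`. Expanding `t` in a Hilbert basis reduces
this to `⟨x,t⟩⟨t,u⟩ ≤ ⟨x,u⟩` for basis elements `u`, and since the partial units join to `⊤`
it is enough to check `⟨x,t⟩m ≤ ⟨x,u⟩` for partial units `m ≤ ⟨t,u⟩`. For such `m` the element
`r = mu` lies below `t`, so `ς(r)t = r`, while `m ≤ ς(r)m`; hence
`⟨x,t⟩m ≤ ⟨x,ς(r)t⟩m = ⟨x,r⟩m = ⟨x,u⟩m*m ≤ ⟨x,u⟩`.
-/

theorem monotone_of_map_sSup_eq_iSup {α β : Type*} [CompleteLattice α] [CompleteLattice β]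
    {f : α → β} (hf : ∀ S : Set α, f (sSup S) = ⨆ a ∈ S, f a) : Monotone f := by
  intro a b hab
  have h := hf {a, b}
  rw [sSup_pair, sup_eq_right.2 hab, iSup_pair] at h
  exact h ▸ le_sup_left

namespace IQuantale

variable {Q : Type*} [CompleteLattice Q] (Qs : IQuantale Q)

theorem mul_le_mul {a a' b b' : Q} (ha : a ≤ a') (hb : b ≤ b') :
    Qs.mul a b ≤ Qs.mul a' b' :=
  calc Qs.mul a b ≤ Qs.mul a' b :=
        monotone_of_map_sSup_eq_iSup (f := (Qs.mul · b)) (fun S => Qs.sSup_mul S b) ha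
    _ ≤ Qs.mul a' b' := monotone_of_map_sSup_eq_iSup (Qs.mul_sSup a') hb

theorem star_mono : Monotone Qs.star :=
  monotone_of_map_sSup_eq_iSup Qs.star_sSup

theorem star_e : Qs.star Qs.e = Qs.e :=
  calc Qs.star Qs.e = Qs.mul (Qs.star Qs.e) (Qs.star (Qs.star Qs.e)) := by
        rw [Qs.star_star, Qs.mul_e]
    _ = Qs.star (Qs.mul (Qs.star Qs.e) Qs.e) := (Qs.star_mul _ _).symm
    _ = Qs.e := by rw [Qs.mul_e, Qs.star_star]

theorem mem_PU_of_le {a k : Q} (hak : a ≤ k) (hk : k ∈ Qs.PU) : a ∈ Qs.PU :=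
  ⟨(Qs.mul_le_mul hak (Qs.star_mono hak)).trans hk.1,
    (Qs.mul_le_mul (Qs.star_mono hak) hak).trans hk.2⟩

end IQuantale

namespace InverseQuantalFrame

variable {Q : Type*} [Order.Frame Q] (Qf : InverseQuantalFrame Q)

theorem supp_mono : Monotone Qf.supp :=
  monotone_of_map_sSup_eq_iSup Qf.supp_sSup

theorem le_mul_star_mul (a : Q) : a ≤ Qf.mul (Qf.mul a (Qf.star a)) a :=
  (Qf.le_supp_mul a).trans (Qf.mul_le_mul (Qf.supp_le_mul_star a) le_rfl)

theorem star_of_le_e {b : Q} (hb : b ≤ Qf.e) : Qf.star b = b := by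
  have le_star : ∀ c ≤ Qf.e, c ≤ Qf.star c := fun c hc =>
    calc c ≤ Qf.mul (Qf.mul c (Qf.star c)) c := Qf.le_mul_star_mul c
      _ ≤ Qf.mul (Qf.mul Qf.e (Qf.star c)) Qf.e := Qf.mul_le_mul (Qf.mul_le_mul hc le_rfl) hc
      _ = Qf.star c := by rw [Qf.e_mul, Qf.mul_e]
  have hb' : Qf.star b ≤ Qf.e := Qf.star_e ▸ Qf.star_mono hb
  exact le_antisymm (by simpa only [Qf.star_star] using le_star _ hb') (le_star b hb)

theorem le_mul_supp_star (a : Q) : a ≤ Qf.mul a (Qf.supp (Qf.star a)) := by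
  have h := Qf.star_mono (Qf.le_supp_mul (Qf.star a))
  rwa [Qf.star_mul, Qf.star_star, Qf.star_of_le_e (Qf.supp_le_e _)] at h

theorem iSup_inf_PU (a : Q) : ⨆ k ∈ Qf.PU, a ⊓ k = a := by
  rw [← inf_sSup_eq]
  exact (congrArg (a ⊓ ·) Qf.sSup_PU).trans (inf_top_eq a)

end InverseQuantalFrame

namespace QuantaleModule

variable {Q X : Type*} [CompleteLattice Q] [CompleteLattice X] {Qs : IQuantale Q}
  (M : QuantaleModule Qs X)

theorem act_le_act {a a' : Q} {x x' : X} (ha : a ≤ a') (hx : x ≤ x') :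
    M.act a x ≤ M.act a' x' :=
  calc M.act a x ≤ M.act a' x :=
        monotone_of_map_sSup_eq_iSup (f := (M.act · x)) (fun S => M.sSup_act S x) ha
    _ ≤ M.act a' x' := monotone_of_map_sSup_eq_iSup (M.act_sSup a') hx

end QuantaleModule

namespace PreHilbertModule

variable {Q X : Type*} [CompleteLattice Q] [CompleteLattice X] {Qs : IQuantale Q}
  (H : PreHilbertModule Qs X)

theorem inner_mono_left {x x' : X} (y : X) (hx : x ≤ x') : H.inner x y ≤ H.inner x' y :=
  monotone_of_map_sSup_eq_iSup (f := (H.inner · y)) (fun S => H.sSup_inner S y) hx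

theorem inner_act_right (x : X) (a : Q) (y : X) :
    H.inner x (H.act a y) = Qs.mul (H.inner x y) (Qs.star a) := by
  rw [H.inner_star, H.inner_act, Qs.star_mul, ← H.inner_star]

theorem mul_star_inner_le {t : X} (ht : H.IsHilbertSection t) (s : X) :
    Qs.mul (H.inner s t) (Qs.star (H.inner s t)) ≤ H.inner s s := by
  rw [← H.inner_star, ← H.inner_act]
  exact H.inner_mono_left s (ht s)

theorem isHilbertSection_of_mem_basis {S : Set X} (hS : H.IsHilbertBasis S) {u : X}
    (hu : u ∈ S) : H.IsHilbertSection u := fun x => by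
  conv_rhs => rw [hS x]
  exact le_iSup₂_of_le (f := fun t _ => H.act (H.inner x t) t) u hu le_rfl

end PreHilbertModule

namespace QSheaf

variable {Q X : Type*} [Order.Frame Q] [Order.Frame X] {Qf : InverseQuantalFrame Q}
  (H : QSheaf Qf X)

theorem sppX_le_e (x : X) : H.sppX x ≤ Qf.e := inf_le_right

theorem act_sppX_self (x : X) : H.act (H.sppX x) x = x := by
  refine le_antisymm ((H.act_le_act (H.sppX_le_e x) le_rfl).trans (H.act_e x).le) ?_
  obtain ⟨S, hS⟩ := H.hasBasis
  conv_lhs => rw [hS x]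
  refine iSup₂_le fun v hv => ?_
  have hvx : H.act (H.inner x v) v ≤ x := H.isHilbertSection_of_mem_basis hS hv x
  have hsupp : Qf.supp (H.inner x v) ≤ H.sppX x := by
    refine le_inf ?_ (Qf.supp_le_e _)
    calc Qf.supp (H.inner x v) ≤ Qf.mul (H.inner x v) (Qf.star (H.inner x v)) :=
          Qf.supp_le_mul_star _
      _ = H.inner (H.act (H.inner x v) v) x := by rw [← H.inner_star, H.inner_act]
      _ ≤ H.inner x x := H.inner_mono_left x hvx
  calc H.act (H.inner x v) v
      ≤ H.act (Qf.mul (H.sppX x) (H.inner x v)) v :=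
        H.act_le_act ((Qf.le_supp_mul _).trans (Qf.mul_le_mul hsupp le_rfl)) le_rfl
    _ = H.act (H.sppX x) (H.act (H.inner x v) v) := H.act_mul _ _ _
    _ ≤ H.act (H.sppX x) x := H.act_le_act le_rfl hvx

theorem supp_inner_le_sppX (u y : X) : Qf.supp (H.inner u y) ≤ H.sppX u :=
  calc Qf.supp (H.inner u y) = Qf.supp (H.inner (H.act (H.sppX u) u) y) := by
        rw [H.act_sppX_self]
    _ = Qf.mul (H.sppX u) (Qf.supp (H.inner u y)) := by
        rw [H.inner_act, Qf.supp_stable _ _ (H.sppX_le_e u)]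
    _ ≤ Qf.mul (H.sppX u) Qf.e := Qf.mul_le_mul le_rfl (Qf.supp_le_e _)
    _ = H.sppX u := Qf.mul_e _

variable {H}

theorem IsLocalSection.mul_le_inner_of_mem_PU {s u : X} (hs : H.IsLocalSection s)
    (hsu : H.act (H.inner s u) u ≤ s) {m : Q} (hm : m ∈ Qf.PU) (hmsu : m ≤ H.inner s u)
    (x : X) : Qf.mul (H.inner x s) m ≤ H.inner x u := by
  set r := H.act m u
  have hrs : H.act (H.sppX r) s = r := hs r ((H.act_le_act hmsu le_rfl).trans hsu)
  have hm_le : m ≤ Qf.mul m (H.inner u u) :=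
    calc m ≤ Qf.mul m (Qf.supp (Qf.star m)) := Qf.le_mul_supp_star m
      _ ≤ Qf.mul m (Qf.supp (H.inner u s)) :=
        Qf.mul_le_mul le_rfl (Qf.supp_mono (H.inner_star u s ▸ Qf.star_mono hmsu))
      _ ≤ Qf.mul m (H.inner u u) :=
        Qf.mul_le_mul le_rfl ((H.supp_inner_le_sppX u s).trans inf_le_left)
  have hmm : Qf.mul m (Qf.star m) ≤ H.sppX r := by
    refine le_inf ?_ hm.1
    rw [H.inner_act, H.inner_act_right, ← Qf.mul_assoc]
    exact Qf.mul_le_mul hm_le le_rfl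
  calc Qf.mul (H.inner x s) m
      ≤ Qf.mul (H.inner x s) (Qf.mul (H.sppX r) m) :=
        Qf.mul_le_mul le_rfl ((Qf.le_mul_star_mul m).trans (Qf.mul_le_mul hmm le_rfl))
    _ = Qf.mul (H.inner x (H.act (H.sppX r) s)) m := by
        rw [H.inner_act_right, Qf.star_of_le_e (H.sppX_le_e r), Qf.mul_assoc]
    _ = Qf.mul (H.inner x u) (Qf.mul (Qf.star m) m) := by
        rw [hrs, H.inner_act_right, Qf.mul_assoc]
    _ ≤ Qf.mul (H.inner x u) Qf.e := Qf.mul_le_mul le_rfl hm.2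
    _ = H.inner x u := Qf.mul_e _

theorem IsLocalSection.mul_inner_le_inner {s u : X} (hs : H.IsLocalSection s)
    (hsu : H.act (H.inner s u) u ≤ s) (x : X) :
    Qf.mul (H.inner x s) (H.inner s u) ≤ H.inner x u := by
  rw [← Qf.iSup_inf_PU (H.inner s u), ← sSup_image, Qf.mul_sSup]
  refine iSup₂_le ?_
  rintro - ⟨k, hk, rfl⟩
  exact hs.mul_le_inner_of_mem_PU hsu (Qf.mem_PU_of_le inf_le_right hk) inf_le_left x

theorem IsLocalSection.isHilbertSection {s : X} (hs : H.IsLocalSection s) :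
    H.IsHilbertSection s := by
  obtain ⟨S, hS⟩ := H.hasBasis
  intro x
  nth_rw 2 [hS s]
  rw [← sSup_image, H.act_sSup]
  refine iSup₂_le ?_
  rintro - ⟨u, hu, rfl⟩
  have hu' := H.isHilbertSection_of_mem_basis hS hu
  calc H.act (H.inner x s) (H.act (H.inner s u) u)
      = H.act (Qf.mul (H.inner x s) (H.inner s u)) u := (H.act_mul _ _ _).symm
    _ ≤ H.act (H.inner x u) u := H.act_le_act (hs.mul_inner_le_inner (hu' s) x) le_rfl
    _ ≤ x := hu' x

end QSheaf

/-- The inner product of two principal sections of a `Q`-sheaf is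
a partial unit. -/
theorem stmt10 {Q X : Type*} [Order.Frame Q] [Order.Frame X]
    (Qf : InverseQuantalFrame Q) (H : QSheaf Qf X)
    (s t : X) (hs : H.IsPrincipalSection s) (ht : H.IsPrincipalSection t) :
    H.inner s t ∈ Qf.toIQuantale.PU := by
  refine ⟨(H.mul_star_inner_le ht.1.isHilbertSection s).trans hs.2, ?_⟩
  rw [H.inner_star s t, Qf.star_star]
  exact (H.mul_star_inner_le hs.1.isHilbertSection t).trans ht.2
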